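/- arXiv:1908.06957 — 3 statements merged into one kernel-verified Lean document; each statement's English description precedes it below -/
import Mathlib

section
/- Let N be a positive integer and 𝒳 ⊆ {1, …, N}, with complement 𝒳̄ = {1, …, N} \ 𝒳. Let W, S′, Q and A₁, …, A_N be random variables such that: (i) H(W | (A₁, …, A_N), Q) = 0 (decodability of the desired messages from all answers and queries); (ii) I(W ; S′) = 0 (security of the storage at servers in 𝒳); (iii) I(Q ; (W, S′)) = 0; and (iv) H((A_n)_{n∈𝒳} | Q, S′) = 0 (the answers of servers in 𝒳 are determined by the queries and their storage). Then H(W) ≤ Σ_{n∈𝒳̄} H(A_n) − H((A_n)_{n∈𝒳̄} | S′, Q, W). -/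
open scoped BigOperators Classical

noncomputable section

namespace SDMM

variable {Ω : Type} [Fintype Ω]

/-- The probability that the random variable `X` (on finite sample space `Ω`
with probability mass function `p`) takes the value `a`. -/
def distOf (p : Ω → ℝ) {α : Type*} (X : Ω → α) (a : α) : ℝ :=
  ∑ ω, if X ω = a then p ω else 0

/-- `p` is a probability mass function on `Ω`. -/
def IsPMF (p : Ω → ℝ) : Prop := (∀ ω, 0 ≤ p ω) ∧ ∑ ω, p ω = 1

/-- Shannon entropy (natural-log units) of the random variable `X`. -/
def H (p : Ω → ℝ) {α : Type*} [Fintype α] (X : Ω → α) : ℝ :=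
  ∑ a, Real.negMulLog (distOf p X a)

/-- Conditional Shannon entropy `H(X | Y) = H(X, Y) - H(Y)`. -/
def Hc (p : Ω → ℝ) {α β : Type*} [Fintype α] [Fintype β] (X : Ω → α) (Y : Ω → β) : ℝ :=
  H p (fun ω => (X ω, Y ω)) - H p Y

/-- Mutual information `I(X ; Y) = H(X) + H(Y) - H(X, Y)`. -/
def MI (p : Ω → ℝ) {α β : Type*} [Fintype α] [Fintype β] (X : Ω → α) (Y : Ω → β) : ℝ :=
  H p X + H p Y - H p (fun ω => (X ω, Y ω))

/-- Conditional mutual information `I(X ; Y | Z)`. -/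
def CMI (p : Ω → ℝ) {α β γ : Type*} [Fintype α] [Fintype β] [Fintype γ]
    (X : Ω → α) (Y : Ω → β) (Z : Ω → γ) : ℝ :=
  H p (fun ω => (X ω, Z ω)) + H p (fun ω => (Y ω, Z ω))
    - H p (fun ω => (X ω, Y ω, Z ω)) - H p Z

/-- `X` is uniformly distributed on `α`. -/
def Uniform (p : Ω → ℝ) {α : Type*} [Fintype α] (X : Ω → α) : Prop :=
  ∀ a, distOf p X a = 1 / Fintype.card α

/-- `X` and `Y` are independent random variables. -/
def IndepRV (p : Ω → ℝ) {α β : Type*} (X : Ω → α) (Y : Ω → β) : Prop :=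
  ∀ a b, distOf p (fun ω => (X ω, Y ω)) (a, b) = distOf p X a * distOf p Y b

end SDMM

namespace SDMM

variable {Ω : Type} [Fintype Ω] {p : Ω → ℝ} {α β γ : Type*}

lemma distOf_nonneg (hp : IsPMF p) (X : Ω → α) (a : α) : 0 ≤ distOf p X a :=
  Finset.sum_nonneg fun ω _ => by split <;> simp [hp.1 ω]

lemma sum_distOf [Fintype α] (X : Ω → α) : ∑ a, distOf p X a = ∑ ω, p ω := by
  unfold distOf; rw [Finset.sum_comm]
  exact Finset.sum_congr rfl fun ω _ => by simp

lemma sum_distOf_one [Fintype α] (hp : IsPMF p) (X : Ω → α) : ∑ a, distOf p X a = 1 := by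
  rw [sum_distOf, hp.2]

lemma marg_snd [Fintype α] (X : Ω → α) (Y : Ω → β) (b : β) :
    ∑ a, distOf p (fun ω => (X ω, Y ω)) (a, b) = distOf p Y b := by
  unfold distOf; rw [Finset.sum_comm]
  refine Finset.sum_congr rfl fun ω _ => ?_
  by_cases h : Y ω = b <;> simp [Prod.ext_iff, h]

lemma marg_fst [Fintype β] (X : Ω → α) (Y : Ω → β) (a : α) :
    ∑ b, distOf p (fun ω => (X ω, Y ω)) (a, b) = distOf p X a := by
  unfold distOf; rw [Finset.sum_comm]
  refine Finset.sum_congr rfl fun ω _ => ?_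
  by_cases h : X ω = a <;> simp [Prod.ext_iff, h]

lemma marg_mid [Fintype β] (X : Ω → α) (Y : Ω → β) (Z : Ω → γ) (x : α) (z : γ) :
    ∑ y, distOf p (fun ω => (X ω, Y ω, Z ω)) (x, y, z)
      = distOf p (fun ω => (X ω, Z ω)) (x, z) := by
  unfold distOf; rw [Finset.sum_comm]
  refine Finset.sum_congr rfl fun ω _ => ?_
  by_cases hx : X ω = x <;> by_cases hz : Z ω = z <;> simp [Prod.ext_iff, hx, hz]

lemma marg_head [Fintype α] (X : Ω → α) (Y : Ω → β) (Z : Ω → γ) (y : β) (z : γ) :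
    ∑ x, distOf p (fun ω => (X ω, Y ω, Z ω)) (x, y, z)
      = distOf p (fun ω => (Y ω, Z ω)) (y, z) := by
  unfold distOf; rw [Finset.sum_comm]
  refine Finset.sum_congr rfl fun ω _ => ?_
  by_cases hy : Y ω = y <;> by_cases hz : Z ω = z <;> simp [Prod.ext_iff, hy, hz]

lemma key_ineq (a r s t : ℝ) (ha : 0 ≤ a) (har : a ≤ r) (has : a ≤ s) (hat : a ≤ t)
    (hr : 0 ≤ r) (hs : 0 ≤ s) (ht : 0 ≤ t) :
    a - r * s / t ≤ -(a * Real.log r) - a * Real.log s + a * Real.log a + a * Real.log t := by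
  rcases eq_or_lt_of_le ha with h0 | h0
  · rw [← h0]
    simp only [zero_mul, neg_zero, zero_sub, add_zero, zero_add, sub_zero]
    exact neg_nonpos.2 (by positivity)
  · have hr' : 0 < r := lt_of_lt_of_le h0 har
    have hs' : 0 < s := lt_of_lt_of_le h0 has
    have ht' : 0 < t := lt_of_lt_of_le h0 hat
    set u := a * t / (r * s) with hu
    have hu' : 0 < u := div_pos (mul_pos h0 ht') (mul_pos hr' hs')
    have hlog : 1 - u⁻¹ ≤ Real.log u := Real.one_sub_inv_le_log_of_pos hu'
    have hexp : Real.log u = Real.log a + Real.log t - Real.log r - Real.log s := by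
      rw [hu, Real.log_div (by positivity) (by positivity), Real.log_mul h0.ne' ht'.ne',
        Real.log_mul hr'.ne' hs'.ne']
      ring
    have h2 : a * (1 - u⁻¹) ≤ a * Real.log u := mul_le_mul_of_nonneg_left hlog ha
    have h3 : a * (1 - u⁻¹) = a - r * s / t := by
      rw [hu]; field_simp
    rw [h3, hexp] at h2
    linarith [h2]

lemma negMulLog_expand {ι : Type*} [Fintype ι] (f : ι → ℝ) (c : ℝ) (h : ∑ i, f i = c) :
    Real.negMulLog c = ∑ i, -(f i * Real.log c) := by
  calc Real.negMulLog c = -((∑ i, f i) * Real.log c) := by rw [h, Real.negMulLog, neg_mul]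
    _ = ∑ i, -(f i * Real.log c) := by rw [Finset.sum_mul, ← Finset.sum_neg_distrib]

lemma CMI_nonneg [Fintype α] [Fintype β] [Fintype γ] (hp : IsPMF p)
    (X : Ω → α) (Y : Ω → β) (Z : Ω → γ) : 0 ≤ CMI p X Y Z := by
  classical
  set d : α → β → γ → ℝ := fun x y z => distOf p (fun ω => (X ω, Y ω, Z ω)) (x, y, z) with hd
  set r : α → γ → ℝ := fun x z => distOf p (fun ω => (X ω, Z ω)) (x, z) with hr
  set s : β → γ → ℝ := fun y z => distOf p (fun ω => (Y ω, Z ω)) (y, z) with hs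
  set t : γ → ℝ := fun z => distOf p Z z with ht
  have hdr : ∀ x z, ∑ y, d x y z = r x z := fun x z => marg_mid X Y Z x z
  have hds : ∀ y z, ∑ x, d x y z = s y z := fun y z => marg_head X Y Z y z
  have hrt : ∀ z, ∑ x, r x z = t z := fun z => marg_snd X Z z
  have hst : ∀ z, ∑ y, s y z = t z := fun z => marg_snd Y Z z
  have hd0 : ∀ x y z, 0 ≤ d x y z := fun x y z => distOf_nonneg hp _ _
  have hr0 : ∀ x z, 0 ≤ r x z := fun x z => distOf_nonneg hp _ _
  have hs0 : ∀ y z, 0 ≤ s y z := fun y z => distOf_nonneg hp _ _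
  have ht0 : ∀ z, 0 ≤ t z := fun z => distOf_nonneg hp _ _
  have hdler : ∀ x y z, d x y z ≤ r x z := fun x y z => by
    rw [← hdr]; exact Finset.single_le_sum (fun y _ => hd0 x y z) (Finset.mem_univ y)
  have hdles : ∀ x y z, d x y z ≤ s y z := fun x y z => by
    rw [← hds]; exact Finset.single_le_sum (fun x _ => hd0 x y z) (Finset.mem_univ x)
  have hrlet : ∀ x z, r x z ≤ t z := fun x z => by
    rw [← hrt]; exact Finset.single_le_sum (fun x _ => hr0 x z) (Finset.mem_univ x)
  have hH1 : H p (fun ω => (X ω, Z ω)) = ∑ z, ∑ x, ∑ y, -(d x y z * Real.log (r x z)) := by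
    rw [H, Fintype.sum_prod_type, Finset.sum_comm]
    exact Finset.sum_congr rfl fun z _ => Finset.sum_congr rfl fun x _ =>
      negMulLog_expand _ _ (hdr x z)
  have hH2 : H p (fun ω => (Y ω, Z ω)) = ∑ z, ∑ x, ∑ y, -(d x y z * Real.log (s y z)) := by
    rw [H, Fintype.sum_prod_type, Finset.sum_comm]
    rw [show (∑ z, ∑ y : β, Real.negMulLog (distOf p (fun ω => (Y ω, Z ω)) (y, z)))
        = ∑ z, ∑ y, ∑ x, -(d x y z * Real.log (s y z)) from
      Finset.sum_congr rfl fun z _ => Finset.sum_congr rfl fun y _ =>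
        negMulLog_expand _ _ (hds y z)]
    exact Finset.sum_congr rfl fun z _ => Finset.sum_comm
  have hH3 : H p (fun ω => (X ω, Y ω, Z ω)) = ∑ z, ∑ x, ∑ y, -(d x y z * Real.log (d x y z)) := by
    rw [H, Fintype.sum_prod_type]
    rw [show (∑ x, ∑ q : β × γ, Real.negMulLog (distOf p (fun ω => (X ω, Y ω, Z ω)) (x, q)))
        = ∑ x, ∑ y, ∑ z, -(d x y z * Real.log (d x y z)) from
      Finset.sum_congr rfl fun x _ => by
        rw [Fintype.sum_prod_type]
        exact Finset.sum_congr rfl fun y _ => Finset.sum_congr rfl fun z _ => by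
          rw [Real.negMulLog, neg_mul]]
    rw [show (∑ x, ∑ y, ∑ z, -(d x y z * Real.log (d x y z)))
        = ∑ x, ∑ z, ∑ y, -(d x y z * Real.log (d x y z)) from
      Finset.sum_congr rfl fun x _ => Finset.sum_comm]
    exact Finset.sum_comm
  have hH4 : H p Z = ∑ z, ∑ x, ∑ y, -(d x y z * Real.log (t z)) := by
    rw [H]
    refine Finset.sum_congr rfl fun z _ => ?_
    calc Real.negMulLog (distOf p Z z)
        = ∑ x, -(r x z * Real.log (t z)) := negMulLog_expand _ _ (hrt z)
      _ = ∑ x, ∑ y, -(d x y z * Real.log (t z)) := Finset.sum_congr rfl fun x _ => by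
          rw [← hdr x z, Finset.sum_mul, ← Finset.sum_neg_distrib]
  have hCMI : CMI p X Y Z = ∑ z, ∑ x, ∑ y,
      (-(d x y z * Real.log (r x z)) - d x y z * Real.log (s y z)
        + d x y z * Real.log (d x y z) + d x y z * Real.log (t z)) := by
    rw [CMI, hH1, hH2, hH3, hH4]
    rw [← Finset.sum_add_distrib, ← Finset.sum_sub_distrib, ← Finset.sum_sub_distrib]
    refine Finset.sum_congr rfl fun z _ => ?_
    rw [← Finset.sum_add_distrib, ← Finset.sum_sub_distrib, ← Finset.sum_sub_distrib]
    refine Finset.sum_congr rfl fun x _ => ?_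
    rw [← Finset.sum_add_distrib, ← Finset.sum_sub_distrib, ← Finset.sum_sub_distrib]
    refine Finset.sum_congr rfl fun y _ => by ring
  have hzero : ∑ z, ∑ x, ∑ y, (d x y z - r x z * s y z / t z) = 0 := by
    have : ∀ z, ∑ x, ∑ y, (d x y z - r x z * s y z / t z) = 0 := by
      intro z
      have hA : ∑ x, ∑ y, d x y z = t z := by
        rw [← hrt z]; exact Finset.sum_congr rfl fun x _ => hdr x z
      have hB : ∑ x, ∑ y, r x z * s y z / t z = t z := by
        have : ∀ x, ∑ y, r x z * s y z / t z = r x z * (t z / t z) := by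
          intro x
          simp only [mul_div_assoc, ← Finset.mul_sum, ← Finset.sum_div, hst z]
        rw [Finset.sum_congr rfl fun x _ => this x, ← Finset.sum_mul, hrt z]
        rcases eq_or_ne (t z) 0 with h | h
        · simp [h]
        · rw [div_self h, mul_one]
      simp only [Finset.sum_sub_distrib]
      rw [hA, hB, sub_self]
    rw [Finset.sum_congr rfl fun z _ => this z, Finset.sum_const, smul_zero]
  rw [hCMI, ← hzero]
  refine Finset.sum_le_sum fun z _ => Finset.sum_le_sum fun x _ => Finset.sum_le_sum fun y _ => ?_
  exact key_ineq (d x y z) (r x z) (s y z) (t z) (hd0 x y z) (hdler x y z) (hdles x y z)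
    ((hdler x y z).trans (hrlet x z)) (hr0 x z) (hs0 y z) (ht0 z)

lemma H_comp_inj [Fintype α] [Fintype β] (f : α → β) (hf : Function.Injective f)
    (X : Ω → α) : H p (fun ω => f (X ω)) = H p X := by
  unfold H
  rw [← Finset.sum_subset (Finset.subset_univ (Finset.univ.image f))]
  · rw [Finset.sum_image (fun a _ b _ h => hf h)]
    refine Finset.sum_congr rfl fun a _ => ?_
    congr 1
    unfold distOf
    exact Finset.sum_congr rfl fun ω _ => by simp [hf.eq_iff]
  · intro b _ hb
    have : distOf p (fun ω => f (X ω)) b = 0 := by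
      refine Finset.sum_eq_zero fun ω _ => ?_
      rw [if_neg]
      intro h
      exact hb (Finset.mem_image.2 ⟨X ω, Finset.mem_univ _, h⟩)
    simp [this]

/-- `H(Y) ≤ H(X, Y)`. -/
lemma H_le_pair [Fintype α] [Fintype β] (hp : IsPMF p) (X : Ω → α) (Y : Ω → β) :
    H p Y ≤ H p (fun ω => (X ω, Y ω)) := by
  have h := CMI_nonneg hp X X Y
  unfold CMI at h
  have hdup : H p (fun ω => (X ω, X ω, Y ω)) = H p (fun ω => (X ω, Y ω)) :=
    H_comp_inj (fun q : α × β => (q.1, q.1, q.2))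
      (fun a b hab => by
        rw [Prod.ext_iff] at hab
        exact Prod.ext hab.1 (Prod.ext_iff.1 hab.2).2) (fun ω => (X ω, Y ω))
  rw [hdup] at h
  linarith

/-- `H` of a variable valued in a subsingleton is zero. -/
lemma H_subsingleton [Fintype α] [Subsingleton α] (hp : IsPMF p) (X : Ω → α) :
    H p X = 0 := by
  cases isEmpty_or_nonempty α with
  | inl h => simp [H, Finset.univ_eq_empty]
  | inr h =>
    obtain ⟨a₀⟩ := h
    haveI : Unique α := uniqueOfSubsingleton a₀
    rw [H, Finset.univ_unique, Finset.sum_singleton]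
    have : distOf p X default = 1 := by
      unfold distOf
      rw [Finset.sum_congr rfl fun ω _ => if_pos (Subsingleton.elim _ _), hp.2]
    simp [this]

/-- Subadditivity. -/
lemma H_pair_le_add [Fintype α] [Fintype β] (hp : IsPMF p) (X : Ω → α) (Y : Ω → β) :
    H p (fun ω => (X ω, Y ω)) ≤ H p X + H p Y := by
  have h := CMI_nonneg hp X Y (fun _ => (PUnit.unit : PUnit.{1}))
  unfold CMI at h
  have hU : H p (fun _ : Ω => (PUnit.unit : PUnit.{1})) = 0 := H_subsingleton hp _
  have h1 : H p (fun ω => (X ω, (PUnit.unit : PUnit.{1}))) = H p X :=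
    H_comp_inj (fun a : α => (a, (PUnit.unit : PUnit.{1}))) (fun a b hab => by injection hab) X
  have h2 : H p (fun ω => (Y ω, (PUnit.unit : PUnit.{1}))) = H p Y :=
    H_comp_inj (fun a : β => (a, (PUnit.unit : PUnit.{1}))) (fun a b hab => by injection hab) Y
  have h3 : H p (fun ω => (X ω, Y ω, (PUnit.unit : PUnit.{1}))) = H p (fun ω => (X ω, Y ω)) :=
    H_comp_inj (fun q : α × β => (q.1, q.2, (PUnit.unit : PUnit.{1})))
      (fun a b hab => by
        injection hab with e1 e2; injection e2 with e2 _; exact Prod.ext e1 e2)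
      (fun ω => (X ω, Y ω))
  rw [h1, h2, h3, hU] at h
  linarith

/-- Submodularity. -/
lemma H_submod [Fintype α] [Fintype β] [Fintype γ] (hp : IsPMF p)
    (X : Ω → α) (Y : Ω → β) (Z : Ω → γ) :
    H p (fun ω => (X ω, Y ω, Z ω)) + H p Z
      ≤ H p (fun ω => (X ω, Z ω)) + H p (fun ω => (Y ω, Z ω)) := by
  have h := CMI_nonneg hp X Y Z
  unfold CMI at h
  linarith

/-- If `X` is determined by `Z`, then adding `X` to a joint with `Z` changes nothing. -/
lemma H_det_drop [Fintype α] [Fintype β] [Fintype γ] (hp : IsPMF p)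
    (X : Ω → α) (Y : Ω → β) (Z : Ω → γ)
    (h : H p (fun ω => (X ω, Z ω)) = H p Z) :
    H p (fun ω => (X ω, Y ω, Z ω)) = H p (fun ω => (Y ω, Z ω)) := by
  have h1 := H_submod hp X Y Z
  have h2 : H p (fun ω => (Y ω, Z ω)) ≤ H p (fun ω => (X ω, Y ω, Z ω)) :=
    H_le_pair hp X (fun ω => (Y ω, Z ω))
  linarith

lemma H_pi_le {ι : Type*} [DecidableEq ι] {D : ι → Type*} [∀ i, Fintype (D i)]
    (hp : IsPMF p) (X : ∀ i, Ω → D i) (s : Finset ι) :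
    H p (fun ω => (fun i : s => X i.1 ω)) ≤ ∑ i ∈ s, H p (X i) := by
  classical
  induction s using Finset.induction_on with
  | empty =>
    haveI : Subsingleton (∀ i : ((∅ : Finset ι) : Finset ι), D i.1) :=
      ⟨fun f g => funext fun i => absurd i.2 (Finset.notMem_empty i.1)⟩
    rw [Finset.sum_empty]
    exact le_of_eq (H_subsingleton hp _)
  | @insert j s' hj ih =>
    set f : (∀ i : (insert j s' : Finset ι), D i.1) → D j × (∀ i : s', D i.1) :=
      fun g => (g ⟨j, Finset.mem_insert_self j s'⟩,
        fun i => g ⟨i.1, Finset.mem_insert_of_mem i.2⟩) with hfdef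
    have hf : Function.Injective f := by
      intro g g' h
      rw [Prod.ext_iff] at h
      funext i
      obtain ⟨iv, hiv⟩ := i
      rcases Finset.mem_insert.1 hiv with h1 | h1
      · subst h1
        exact h.1
      · exact congrFun h.2 ⟨iv, h1⟩
    have heq : H p (fun ω => (fun i : (insert j s' : Finset ι) => X i.1 ω))
        = H p (fun ω => (X j ω, fun i : s' => X i.1 ω)) :=
      (H_comp_inj f hf (fun ω => (fun i : (insert j s' : Finset ι) => X i.1 ω))).symm
    rw [heq, Finset.sum_insert hj]
    calc H p (fun ω => (X j ω, fun i : s' => X i.1 ω))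
        ≤ H p (X j) + H p (fun ω => (fun i : s' => X i.1 ω)) :=
          H_pair_le_add hp (X j) (fun ω => (fun i : s' => X i.1 ω))
      _ ≤ H p (X j) + ∑ i ∈ s', H p (X i) := by linarith [ih]

end SDMM

/-- **Lemma 10 of MM-XSTPIR (download lower bound).**
Let `𝒳 ⊆ [N]` with complement `𝒳̄`.  If the desired messages `W` are decodable
from all answers and the queries `Q`, the storage `S'` of the servers in `𝒳`
is independent of `W`, the queries are independent of `(W, S')`, and the
answers of the servers in `𝒳` are a function of `(Q, S')`, then
`H(W) ≤ Σ_{n∈𝒳̄} H(Aₙ) - H((Aₙ)_{n∈𝒳̄} | S', Q, W)`. -/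
theorem mm_xstpir_download_lower_bound
    (N : ℕ) (hN : 0 < N) (𝒳 : Finset (Fin N))
    (Ω : Type) [Fintype Ω] (p : Ω → ℝ) (hp : SDMM.IsPMF p)
    (D : Fin N → Type) [∀ n, Fintype (D n)]
    {αW αS' αQ : Type} [Fintype αW] [Fintype αS'] [Fintype αQ]
    (A : ∀ n, Ω → D n) (W : Ω → αW) (S' : Ω → αS') (Q : Ω → αQ)
    (hdec : SDMM.Hc p W (fun ω => ((fun n => A n ω), Q ω)) = 0)
    (hsec : SDMM.MI p W S' = 0)
    (hQ : SDMM.MI p Q (fun ω => (W ω, S' ω)) = 0)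
    (hans : SDMM.Hc p (fun ω => (fun n : 𝒳 => A n.1 ω)) (fun ω => (Q ω, S' ω)) = 0) :
    SDMM.H p W ≤ ∑ n ∈ 𝒳ᶜ, SDMM.H p (A n) -
      SDMM.Hc p (fun ω => (fun n : (𝒳ᶜ : Finset (Fin N)) => A n.1 ω))
        (fun ω => (S' ω, Q ω, W ω)) := by
  classical
  open SDMM in
  rw [SDMM.Hc]
  rw [SDMM.MI, sub_eq_zero] at hsec hQ
  rw [SDMM.Hc, sub_eq_zero] at hdec hans
  -- F1 : H(W,S') = H W + H S'  — hsec.symm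
  -- F2 : H Q + H(W,S') = H(Q,W,S') — hQ
  have F3 : SDMM.H p (fun ω => (W ω, S' ω, Q ω)) = SDMM.H p (fun ω => (Q ω, W ω, S' ω)) :=
    SDMM.H_comp_inj (fun x : αQ × αW × αS' => (x.2.1, x.2.2, x.1))
      (fun a b h => by simp only [Prod.ext_iff] at h ⊢; tauto)
      (fun ω => (Q ω, W ω, S' ω))
  have F4 : SDMM.H p (fun ω => (S' ω, Q ω)) ≤ SDMM.H p S' + SDMM.H p Q :=
    SDMM.H_pair_le_add hp S' Q
  have F5 : SDMM.H p (fun ω => (S' ω, Q ω, W ω)) = SDMM.H p (fun ω => (W ω, S' ω, Q ω)) :=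
    SDMM.H_comp_inj (fun x : αW × αS' × αQ => (x.2.1, x.2.2, x.1))
      (fun a b h => by simp only [Prod.ext_iff] at h ⊢; tauto)
      (fun ω => (W ω, S' ω, Q ω))
  have F7 : SDMM.H p (fun ω => (W ω, S' ω, (fun n => A n ω), Q ω))
      = SDMM.H p (fun ω => (S' ω, (fun n => A n ω), Q ω)) :=
    SDMM.H_det_drop hp W S' (fun ω => ((fun n => A n ω), Q ω)) hdec
  have F8 : SDMM.H p (fun ω => (W ω, (fun n => A n ω), S' ω, Q ω))
      = SDMM.H p (fun ω => (W ω, S' ω, (fun n => A n ω), Q ω)) :=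
    SDMM.H_comp_inj
      (fun x : αW × αS' × (∀ n, D n) × αQ => (x.1, x.2.2.1, x.2.1, x.2.2.2))
      (fun a b h => by simp only [Prod.ext_iff] at h ⊢; tauto)
      (fun ω => (W ω, S' ω, (fun n => A n ω), Q ω))
  have F9 : SDMM.H p (fun ω => ((fun n => A n ω), S' ω, Q ω))
      = SDMM.H p (fun ω => (S' ω, (fun n => A n ω), Q ω)) :=
    SDMM.H_comp_inj
      (fun x : αS' × (∀ n, D n) × αQ => (x.2.1, x.1, x.2.2))
      (fun a b h => by simp only [Prod.ext_iff] at h ⊢; tauto)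
      (fun ω => (S' ω, (fun n => A n ω), Q ω))
  have F10 : SDMM.H p (fun ω => (W ω, (fun n => A n ω), S' ω, Q ω))
      = SDMM.H p (fun ω => ((fun n => A n ω), S' ω, Q ω, W ω)) :=
    (SDMM.H_comp_inj
      (fun x : (∀ n, D n) × αS' × αQ × αW => (x.2.2.2, x.1, x.2.1, x.2.2.1))
      (fun a b h => by simp only [Prod.ext_iff] at h ⊢; tauto)
      (fun ω => ((fun n => A n ω), S' ω, Q ω, W ω)))
  -- hans reshuffled
  have F11 : SDMM.H p (fun ω => ((fun n : 𝒳 => A n.1 ω), S' ω, Q ω))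
      = SDMM.H p (fun ω => ((fun n : 𝒳 => A n.1 ω), Q ω, S' ω)) :=
    SDMM.H_comp_inj
      (fun x : (∀ n : 𝒳, D n.1) × αQ × αS' => (x.1, x.2.2, x.2.1))
      (fun a b h => by simp only [Prod.ext_iff] at h ⊢; tauto)
      (fun ω => ((fun n : 𝒳 => A n.1 ω), Q ω, S' ω))
  have F11b : SDMM.H p (fun ω => (S' ω, Q ω)) = SDMM.H p (fun ω => (Q ω, S' ω)) :=
    SDMM.H_comp_inj (fun x : αQ × αS' => (x.2, x.1))
      (fun a b h => by simp only [Prod.ext_iff] at h ⊢; tauto)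
      (fun ω => (Q ω, S' ω))
  have F12 : SDMM.H p (fun ω => ((fun n : 𝒳 => A n.1 ω), S' ω, Q ω))
      = SDMM.H p (fun ω => (S' ω, Q ω)) := by
    rw [F11, F11b, hans]
  have F13 : SDMM.H p (fun ω => ((fun n : 𝒳 => A n.1 ω),
        (fun n : (𝒳ᶜ : Finset (Fin N)) => A n.1 ω), S' ω, Q ω))
      = SDMM.H p (fun ω => ((fun n : (𝒳ᶜ : Finset (Fin N)) => A n.1 ω), S' ω, Q ω)) :=
    SDMM.H_det_drop hp (fun ω => (fun n : 𝒳 => A n.1 ω))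
      (fun ω => (fun n : (𝒳ᶜ : Finset (Fin N)) => A n.1 ω))
      (fun ω => (S' ω, Q ω)) F12
  have hφ : ∀ {τ : Type} , Function.Injective
      (fun x : (∀ n, D n) × τ =>
        ((fun n : 𝒳 => x.1 n.1), ((fun n : (𝒳ᶜ : Finset (Fin N)) => x.1 n.1), x.2))) := by
    intro τ a b h
    rw [Prod.ext_iff] at h
    obtain ⟨h1, h2⟩ := h
    rw [Prod.ext_iff] at h2
    refine Prod.ext ?_ h2.2
    funext n
    by_cases hn : n ∈ 𝒳
    · exact congrFun h1 ⟨n, hn⟩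
    · exact congrFun h2.1 ⟨n, Finset.mem_compl.2 hn⟩
  have F14 : SDMM.H p (fun ω => ((fun n : 𝒳 => A n.1 ω),
        (fun n : (𝒳ᶜ : Finset (Fin N)) => A n.1 ω), S' ω, Q ω))
      = SDMM.H p (fun ω => ((fun n => A n ω), S' ω, Q ω)) :=
    SDMM.H_comp_inj _ hφ (fun ω => ((fun n => A n ω), S' ω, Q ω))
  have F15 : SDMM.H p (fun ω => ((fun n : 𝒳 => A n.1 ω),
        (fun n : (𝒳ᶜ : Finset (Fin N)) => A n.1 ω), S' ω, Q ω, W ω))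
      = SDMM.H p (fun ω => ((fun n => A n ω), S' ω, Q ω, W ω)) :=
    SDMM.H_comp_inj _ hφ (fun ω => ((fun n => A n ω), S' ω, Q ω, W ω))
  have F16 : SDMM.H p (fun ω => ((fun n : (𝒳ᶜ : Finset (Fin N)) => A n.1 ω), S' ω, Q ω, W ω))
      ≤ SDMM.H p (fun ω => ((fun n : 𝒳 => A n.1 ω),
        (fun n : (𝒳ᶜ : Finset (Fin N)) => A n.1 ω), S' ω, Q ω, W ω)) :=
    SDMM.H_le_pair hp (fun ω => (fun n : 𝒳 => A n.1 ω))
      (fun ω => ((fun n : (𝒳ᶜ : Finset (Fin N)) => A n.1 ω), S' ω, Q ω, W ω))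
  have F17 : SDMM.H p (fun ω => ((fun n : (𝒳ᶜ : Finset (Fin N)) => A n.1 ω), S' ω, Q ω))
      ≤ SDMM.H p (fun ω => (fun n : (𝒳ᶜ : Finset (Fin N)) => A n.1 ω))
        + SDMM.H p (fun ω => (S' ω, Q ω)) :=
    SDMM.H_pair_le_add hp (fun ω => (fun n : (𝒳ᶜ : Finset (Fin N)) => A n.1 ω))
      (fun ω => (S' ω, Q ω))
  have F18 : SDMM.H p (fun ω => (fun n : (𝒳ᶜ : Finset (Fin N)) => A n.1 ω))
      ≤ ∑ n ∈ 𝒳ᶜ, SDMM.H p (A n) :=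
    SDMM.H_pi_le hp A 𝒳ᶜ
  linarith [hsec, hQ, F3, F4, F5, F7, F8, F9, F10, F13, F14, F15, F16, F17, F18]
end
end

section
/- Let K be a positive integer and let W₁, …, W_K be mutually independent random variables, each with Shannon entropy H(W_k) = ℓ. Let 𝒦, κ ⊆ {1, …, K} and let S′, Q be random variables such that I(S′ ; (W₁, …, W_K)) = 0 and I(Q ; ((W_k)_{k∈𝒦}, (W_k)_{k∈κ}, S′)) = 0. Then I((W_k)_{k∈𝒦} ; (S′, Q, (W_k)_{k∈κ})) = |𝒦 ∩ κ| · ℓ. -/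
open scoped BigOperators Classical

noncomputable section

namespace SDMMAux
open SDMM Real

variable {Ω : Type} [Fintype Ω] {p : Ω → ℝ}

lemma distOf_nonneg (hp : ∀ ω, 0 ≤ p ω) {α : Type*} (X : Ω → α) (a : α) :
    0 ≤ distOf p X a := by
  unfold distOf
  exact Finset.sum_nonneg fun ω _ => by by_cases h : X ω = a <;> simp [h, hp ω]

lemma sum_distOf {α : Type*} [Fintype α] (hp : ∑ ω, p ω = 1) (X : Ω → α) :
    ∑ a, distOf p X a = 1 := by
  unfold distOf
  rw [Finset.sum_comm]
  simpa using hp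

lemma H_comp_inj {α β : Type*} [Fintype α] [Fintype β] (f : α → β)
    (hf : Function.Injective f) (X : Ω → α) :
    H p (fun ω => f (X ω)) = H p X := by
  unfold H
  have hvan : ∀ b ∈ Finset.univ, b ∉ Finset.image f Finset.univ →
      Real.negMulLog (distOf p (fun ω => f (X ω)) b) = 0 := by
    intro b _ hb
    have : distOf p (fun ω => f (X ω)) b = 0 := by
      unfold distOf
      refine Finset.sum_eq_zero fun ω _ => ?_
      rw [if_neg]
      intro h
      exact hb (Finset.mem_image.2 ⟨X ω, Finset.mem_univ _, h⟩)
    simp [this]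
  rw [← Finset.sum_subset (Finset.subset_univ (Finset.image f Finset.univ)) hvan,
    Finset.sum_image (fun a _ b _ h => hf h)]
  refine Finset.sum_congr rfl fun a _ => ?_
  congr 1
  unfold distOf
  exact Finset.sum_congr rfl fun ω _ => by simp [hf.eq_iff]

lemma H_unique {α : Type*} [Fintype α] [Unique α] (hp : ∑ ω, p ω = 1) (X : Ω → α) :
    H p X = 0 := by
  unfold H
  rw [Fintype.sum_unique]
  have : distOf p X default = 1 := by
    unfold distOf
    simpa [Unique.eq_default (X _)] using hp
  simp [this]

lemma negMulLog_add_le {a b : ℝ} (ha : 0 ≤ a) (hb : 0 ≤ b) (hab : 0 < a → 0 < b) :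
    Real.negMulLog a + a * Real.log b ≤ b - a := by
  rcases eq_or_lt_of_le ha with h | h
  · simp [← h, hb]
  · have hb' := hab h
    have h1 : Real.negMulLog a + a * Real.log b = a * Real.log (b / a) := by
      rw [Real.log_div hb'.ne' h.ne']
      simp [Real.negMulLog]
      ring
    rw [h1]
    have h2 : Real.log (b / a) ≤ b / a - 1 := Real.log_le_sub_one_of_pos (div_pos hb' h)
    have h3 : a * Real.log (b / a) ≤ a * (b / a - 1) :=
      mul_le_mul_of_nonneg_left h2 ha
    have h4 : a * (b / a - 1) = b - a := by field_simp
    linarith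

lemma sum_negMulLog_le {ι : Type*} [Fintype ι] (a b : ι → ℝ)
    (ha : ∀ i, 0 ≤ a i) (hb : ∀ i, 0 ≤ b i) (hab : ∀ i, 0 < a i → 0 < b i)
    (hs : ∑ i, b i ≤ ∑ i, a i) :
    ∑ i, Real.negMulLog (a i) ≤ ∑ i, -(a i * Real.log (b i)) := by
  have key : ∑ i, (Real.negMulLog (a i) + a i * Real.log (b i)) ≤ ∑ i, (b i - a i) :=
    Finset.sum_le_sum (fun i _ => negMulLog_add_le (ha i) (hb i) (hab i))
  rw [Finset.sum_add_distrib, Finset.sum_sub_distrib] at key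
  have h2 : ∑ i, -(a i * Real.log (b i)) = -∑ i, a i * Real.log (b i) := by simp
  linarith [h2]

lemma sum_comm3 {α β γ : Type*} [Fintype α] [Fintype β] [Fintype γ] (f : α → β → γ → ℝ) :
    ∑ x, ∑ y, ∑ z, f x y z = ∑ z, ∑ x, ∑ y, f x y z := by
  have h1 : ∀ x, ∑ y, ∑ z, f x y z = ∑ z, ∑ y, f x y z := fun x => Finset.sum_comm
  simp_rw [h1]
  exact Finset.sum_comm

lemma sum_comm3' {α β γ : Type*} [Fintype α] [Fintype β] [Fintype γ] (f : α → β → γ → ℝ) :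
    ∑ x, ∑ y, ∑ z, f x y z = ∑ y, ∑ z, ∑ x, f x y z := by
  rw [show (∑ x, ∑ y, ∑ z, f x y z) = ∑ y, ∑ x, ∑ z, f x y z from Finset.sum_comm]
  exact Finset.sum_congr rfl fun y _ => Finset.sum_comm

lemma key_ineq {α β γ : Type*} [Fintype α] [Fintype β] [Fintype γ] (d : α → β → γ → ℝ)
    (hd : ∀ x y z, 0 ≤ d x y z)
    (dXZ : α → γ → ℝ) (hXZ : ∀ x z, dXZ x z = ∑ y, d x y z)
    (dYZ : β → γ → ℝ) (hYZ : ∀ y z, dYZ y z = ∑ x, d x y z)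
    (dZ : γ → ℝ) (hZ : ∀ z, dZ z = ∑ x, ∑ y, d x y z) :
    ∑ x, ∑ y, ∑ z, Real.negMulLog (d x y z) + ∑ z, Real.negMulLog (dZ z)
      ≤ (∑ x, ∑ z, Real.negMulLog (dXZ x z)) + ∑ y, ∑ z, Real.negMulLog (dYZ y z) := by
  classical
  have hXZ0 : ∀ x z, 0 ≤ dXZ x z := fun x z =>
    (hXZ x z) ▸ Finset.sum_nonneg fun y _ => hd x y z
  have hYZ0 : ∀ y z, 0 ≤ dYZ y z := fun y z =>
    (hYZ y z) ▸ Finset.sum_nonneg fun x _ => hd x y z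
  have hZalt : ∀ z, dZ z = ∑ x, dXZ x z := by
    intro z; rw [hZ]; exact Finset.sum_congr rfl fun x _ => (hXZ x z).symm
  have hZalt2 : ∀ z, dZ z = ∑ y, dYZ y z := by
    intro z; rw [hZ, Finset.sum_comm]
    exact Finset.sum_congr rfl fun y _ => (hYZ y z).symm
  have hZ0 : ∀ z, 0 ≤ dZ z := fun z =>
    (hZalt z) ▸ Finset.sum_nonneg fun x _ => hXZ0 x z
  have hdleXZ : ∀ x y z, d x y z ≤ dXZ x z := fun x y z =>
    (hXZ x z) ▸ Finset.single_le_sum (fun y _ => hd x y z) (Finset.mem_univ y)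
  have hdleYZ : ∀ x y z, d x y z ≤ dYZ y z := fun x y z =>
    (hYZ y z) ▸ Finset.single_le_sum (fun x _ => hd x y z) (Finset.mem_univ x)
  have hXZleZ : ∀ x z, dXZ x z ≤ dZ z := fun x z =>
    (hZalt z) ▸ Finset.single_le_sum (fun x _ => hXZ0 x z) (Finset.mem_univ x)
  have gibbs := sum_negMulLog_le (ι := α × β × γ)
    (fun t => d t.1 t.2.1 t.2.2)
    (fun t => if dZ t.2.2 = 0 then 0 else dXZ t.1 t.2.2 * dYZ t.2.1 t.2.2 / dZ t.2.2)
    (fun t => hd _ _ _)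
    (fun t => by
      split
      · exact le_refl 0
      · exact div_nonneg (mul_nonneg (hXZ0 _ _) (hYZ0 _ _)) (hZ0 _))
    (fun t ht => by
      have hz : 0 < dZ t.2.2 := lt_of_lt_of_le ht ((hdleXZ _ _ _).trans (hXZleZ _ _))
      rw [if_neg hz.ne']
      exact div_pos (mul_pos (lt_of_lt_of_le ht (hdleXZ _ _ _))
        (lt_of_lt_of_le ht (hdleYZ _ _ _))) hz)
    (by
      have ea : ∑ t : α × β × γ, d t.1 t.2.1 t.2.2 = ∑ z, dZ z := by
        simp only [Fintype.sum_prod_type]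
        rw [sum_comm3]
        exact Finset.sum_congr rfl fun z _ => (hZ z).symm ▸ rfl
      have eb : ∑ t : α × β × γ,
          (if dZ t.2.2 = 0 then 0 else dXZ t.1 t.2.2 * dYZ t.2.1 t.2.2 / dZ t.2.2)
          = ∑ z, (if dZ z = 0 then 0 else dZ z) := by
        simp only [Fintype.sum_prod_type]
        rw [sum_comm3 (fun x y z => if dZ z = 0 then 0 else dXZ x z * dYZ y z / dZ z)]
        refine Finset.sum_congr rfl fun z _ => ?_
        by_cases hz : dZ z = 0
        · simp [hz]
        · simp only [hz, if_false]
          have e1 : ∀ x : α, ∑ y, dXZ x z * dYZ y z / dZ z = dXZ x z * dZ z / dZ z := by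
            intro x
            rw [← Finset.sum_div, ← Finset.mul_sum, ← hZalt2 z]
          simp_rw [e1]
          have e2 : ∀ x : α, dXZ x z * dZ z / dZ z = dXZ x z := fun x => by
            field_simp
          simp_rw [e2]
          exact (hZalt z).symm
      rw [ea, eb]
      refine Finset.sum_le_sum fun z _ => ?_
      by_cases hz : dZ z = 0 <;> simp [hz, hZ0 z])
  have hL : ∑ t : α × β × γ, Real.negMulLog (d t.1 t.2.1 t.2.2)
      = ∑ x, ∑ y, ∑ z, Real.negMulLog (d x y z) := by
    simp [Fintype.sum_prod_type]
  have hterm : ∀ t : α × β × γ,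
      -(d t.1 t.2.1 t.2.2 * Real.log (if dZ t.2.2 = 0 then 0
          else dXZ t.1 t.2.2 * dYZ t.2.1 t.2.2 / dZ t.2.2))
        = -(d t.1 t.2.1 t.2.2 * Real.log (dXZ t.1 t.2.2))
          + -(d t.1 t.2.1 t.2.2 * Real.log (dYZ t.2.1 t.2.2))
          + d t.1 t.2.1 t.2.2 * Real.log (dZ t.2.2) := by
    rintro ⟨x, y, z⟩
    dsimp only
    rcases eq_or_lt_of_le (hd x y z) with h | h
    · rw [← h]; ring
    · have hz : 0 < dZ z := lt_of_lt_of_le h ((hdleXZ x y z).trans (hXZleZ x z))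
      have hx : 0 < dXZ x z := lt_of_lt_of_le h (hdleXZ x y z)
      have hy : 0 < dYZ y z := lt_of_lt_of_le h (hdleYZ x y z)
      rw [if_neg hz.ne', Real.log_div (mul_pos hx hy).ne' hz.ne',
        Real.log_mul hx.ne' hy.ne']
      ring
  have hR : ∑ t : α × β × γ,
      -(d t.1 t.2.1 t.2.2 * Real.log (if dZ t.2.2 = 0 then 0
          else dXZ t.1 t.2.2 * dYZ t.2.1 t.2.2 / dZ t.2.2))
      = (∑ x, ∑ z, Real.negMulLog (dXZ x z)) + (∑ y, ∑ z, Real.negMulLog (dYZ y z))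
        - ∑ z, Real.negMulLog (dZ z) := by
    rw [Finset.sum_congr rfl (fun t _ => hterm t), Finset.sum_add_distrib,
      Finset.sum_add_distrib]
    have p1 : ∑ t : α × β × γ, -(d t.1 t.2.1 t.2.2 * Real.log (dXZ t.1 t.2.2))
        = ∑ x, ∑ z, Real.negMulLog (dXZ x z) := by
      simp only [Fintype.sum_prod_type]
      refine Finset.sum_congr rfl fun x _ => ?_
      rw [Finset.sum_comm]
      refine Finset.sum_congr rfl fun z _ => ?_
      rw [Finset.sum_neg_distrib, ← Finset.sum_mul, ← hXZ x z]
      simp [Real.negMulLog]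
    have p2 : ∑ t : α × β × γ, -(d t.1 t.2.1 t.2.2 * Real.log (dYZ t.2.1 t.2.2))
        = ∑ y, ∑ z, Real.negMulLog (dYZ y z) := by
      simp only [Fintype.sum_prod_type]
      rw [sum_comm3' (fun x y z => -(d x y z * Real.log (dYZ y z)))]
      refine Finset.sum_congr rfl fun y _ => Finset.sum_congr rfl fun z _ => ?_
      rw [Finset.sum_neg_distrib, ← Finset.sum_mul, ← hYZ y z]
      simp [Real.negMulLog]
    have p3 : ∑ t : α × β × γ, d t.1 t.2.1 t.2.2 * Real.log (dZ t.2.2)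
        = -∑ z, Real.negMulLog (dZ z) := by
      simp only [Fintype.sum_prod_type]
      rw [sum_comm3 (fun x y z => d x y z * Real.log (dZ z)), ← Finset.sum_neg_distrib]
      refine Finset.sum_congr rfl fun z _ => ?_
      simp_rw [← Finset.sum_mul]
      rw [← hZ z]
      simp [Real.negMulLog]
    rw [p1, p2, p3]
    ring
  rw [hL, hR] at gibbs
  linarith

lemma marg_XZ {α β γ : Type*} [Fintype β]
    (X : Ω → α) (Y : Ω → β) (Z : Ω → γ) (x : α) (z : γ) :
    distOf p (fun ω => (X ω, Z ω)) (x, z)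
      = ∑ y, distOf p (fun ω => (X ω, Y ω, Z ω)) (x, y, z) := by
  unfold distOf
  rw [Finset.sum_comm]
  refine Finset.sum_congr rfl fun ω _ => ?_
  by_cases h1 : X ω = x <;> by_cases h3 : Z ω = z <;>
    simp [Prod.ext_iff, h1, h3]

lemma marg_YZ {α β γ : Type*} [Fintype α]
    (X : Ω → α) (Y : Ω → β) (Z : Ω → γ) (y : β) (z : γ) :
    distOf p (fun ω => (Y ω, Z ω)) (y, z)
      = ∑ x, distOf p (fun ω => (X ω, Y ω, Z ω)) (x, y, z) := by
  unfold distOf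
  rw [Finset.sum_comm]
  refine Finset.sum_congr rfl fun ω _ => ?_
  by_cases h2 : Y ω = y <;> by_cases h3 : Z ω = z <;>
    simp [Prod.ext_iff, h2, h3]

lemma marg_Z2 {α γ : Type*} [Fintype α]
    (X : Ω → α) (Z : Ω → γ) (z : γ) :
    distOf p Z z = ∑ x, distOf p (fun ω => (X ω, Z ω)) (x, z) := by
  unfold distOf
  rw [Finset.sum_comm]
  refine Finset.sum_congr rfl fun ω _ => ?_
  by_cases h3 : Z ω = z <;> simp [Prod.ext_iff, h3]

lemma marg_Z {α β γ : Type*} [Fintype α] [Fintype β]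
    (X : Ω → α) (Y : Ω → β) (Z : Ω → γ) (z : γ) :
    distOf p Z z = ∑ x, ∑ y, distOf p (fun ω => (X ω, Y ω, Z ω)) (x, y, z) := by
  rw [marg_Z2 X Z z]
  exact Finset.sum_congr rfl fun x _ => marg_XZ X Y Z x z

lemma CMI_nonneg {α β γ : Type*} [Fintype α] [Fintype β] [Fintype γ]
    (hp : IsPMF p) (X : Ω → α) (Y : Ω → β) (Z : Ω → γ) :
    0 ≤ CMI p X Y Z := by
  have key := key_ineq (fun x y z => distOf p (fun ω => (X ω, Y ω, Z ω)) (x, y, z))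
    (fun x y z => distOf_nonneg hp.1 _ _)
    (fun x z => distOf p (fun ω => (X ω, Z ω)) (x, z)) (fun x z => marg_XZ X Y Z x z)
    (fun y z => distOf p (fun ω => (Y ω, Z ω)) (y, z)) (fun y z => marg_YZ X Y Z y z)
    (fun z => distOf p Z z) (fun z => marg_Z X Y Z z)
  unfold CMI H
  simp only [Fintype.sum_prod_type]
  linarith [key]

lemma MI_nonneg {α β : Type*} [Fintype α] [Fintype β] (hp : IsPMF p)
    (X : Ω → α) (Y : Ω → β) : 0 ≤ MI p X Y := by
  have h := CMI_nonneg hp X Y (fun _ => (() : Unit))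
  simp only [CMI] at h
  simp only [MI]
  have e1 : H p (fun ω => (X ω, ())) = H p X :=
    H_comp_inj (fun a => (a, ())) (fun a b h => by simpa using congrArg Prod.fst h) X
  have e3 : H p (fun ω => (X ω, Y ω, ())) = H p (fun ω => (X ω, Y ω)) :=
    H_comp_inj (fun q : α × β => (q.1, q.2, ()))
      (fun q r h => by
        obtain ⟨q1, q2⟩ := q; obtain ⟨r1, r2⟩ := r
        simpa [Prod.ext_iff] using h) (fun ω => (X ω, Y ω))
  have e2 : H p (fun ω => (Y ω, ())) = H p Y :=
    H_comp_inj (fun a => (a, ())) (fun a b h => by simpa using congrArg Prod.fst h) Y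
  have e4 : H p (fun _ : Ω => ()) = 0 := H_unique hp.2 _
  rw [e1, e2, e3, e4] at h
  linarith

lemma H_pair_of_MI_eq_zero {α β : Type*} [Fintype α] [Fintype β]
    {X : Ω → α} {Y : Ω → β} (h : MI p X Y = 0) :
    H p (fun ω => (X ω, Y ω)) = H p X + H p Y := by
  simp only [MI] at h
  linarith

lemma MI_comp_eq_zero {α β γ : Type*} [Fintype α] [Fintype β] [Fintype γ] (hp : IsPMF p)
    (X : Ω → α) (Y : Ω → β) (f : β → γ) (h : MI p X Y = 0) :
    MI p X (fun ω => f (Y ω)) = 0 := by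
  have h1 : H p (fun ω => (Y ω, f (Y ω))) = H p Y :=
    H_comp_inj (fun y => (y, f y)) (fun a b h => by simpa using congrArg Prod.fst h) Y
  have h2 : H p (fun ω => (X ω, Y ω, f (Y ω))) = H p (fun ω => (X ω, Y ω)) :=
    H_comp_inj (fun q : α × β => (q.1, q.2, f q.2))
      (fun a b hab => by
        obtain ⟨a1, a2⟩ := a; obtain ⟨b1, b2⟩ := b
        simp only [Prod.ext_iff] at hab ⊢
        exact ⟨hab.1, hab.2.1⟩) (fun ω => (X ω, Y ω))
  have h3 := CMI_nonneg hp X Y (fun ω => f (Y ω))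
  have h4 := MI_nonneg hp X (fun ω => f (Y ω))
  simp only [CMI] at h3
  simp only [MI] at h4 h ⊢
  rw [h1, h2] at h3
  linarith

variable {K : ℕ} {𝒲 : Fin K → Type} [∀ k, Fintype (𝒲 k)]

lemma H_tuple_le (hp : IsPMF p) (W : ∀ k, Ω → 𝒲 k) (s : Finset (Fin K)) :
    H p (fun ω => (fun k : s => W k.1 ω)) ≤ ∑ k ∈ s, H p (W k) := by
  classical
  induction s using Finset.induction_on with
  | empty =>
    haveI : IsEmpty ({x // x ∈ (∅ : Finset (Fin K))}) :=
      ⟨fun k => Finset.notMem_empty _ k.2⟩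
    rw [H_unique hp.2]
    simp
  | @insert a s ha ih =>
    have hf : Function.Injective
        (fun t : (∀ k : {x // x ∈ insert a s}, 𝒲 k.1) =>
          (t ⟨a, Finset.mem_insert_self a s⟩,
            fun k : {x // x ∈ s} => t ⟨k.1, Finset.mem_insert_of_mem k.2⟩)) := by
      intro t1 t2 h
      have h1 := congrArg Prod.fst h
      have h2 := congrArg Prod.snd h
      dsimp only at h1 h2
      funext k
      obtain ⟨kv, hkm⟩ := k
      rcases Finset.mem_insert.1 hkm with hk | hk
      · subst hk
        exact h1
      · exact congrFun h2 ⟨kv, hk⟩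
    have e : H p (fun ω => (W a ω, fun k : {x // x ∈ s} => W k.1 ω))
        = H p (fun ω => (fun k : {x // x ∈ insert a s} => W k.1 ω)) :=
      H_comp_inj _ hf (fun ω => (fun k : {x // x ∈ insert a s} => W k.1 ω))
    have hsub : 0 ≤ MI p (W a) (fun ω => (fun k : {x // x ∈ s} => W k.1 ω)) :=
      MI_nonneg hp _ _
    simp only [MI] at hsub
    rw [Finset.sum_insert ha, ← e]
    linarith [ih]

lemma H_tuple_eq (hp : IsPMF p) (W : ∀ k, Ω → 𝒲 k)
    (hindep : H p (fun ω => (fun k => W k ω)) = ∑ k, H p (W k))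
    (s : Finset (Fin K)) :
    H p (fun ω => (fun k : s => W k.1 ω)) = ∑ k ∈ s, H p (W k) := by
  classical
  have h1 := H_tuple_le hp W s
  have h2 := H_tuple_le hp W (sᶜ : Finset (Fin K))
  have hf : Function.Injective (fun w : (∀ k, 𝒲 k) =>
      ((fun k : s => w k.1), (fun k : (sᶜ : Finset (Fin K)) => w k.1))) := by
    intro w1 w2 h
    have ha := congrArg Prod.fst h
    have hb := congrArg Prod.snd h
    dsimp only at ha hb
    funext k
    by_cases hk : k ∈ s
    · exact congrFun ha ⟨k, hk⟩
    · exact congrFun hb ⟨k, Finset.mem_compl.2 hk⟩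
  have e : H p (fun ω => ((fun k : s => W k.1 ω), (fun k : (sᶜ : Finset (Fin K)) => W k.1 ω)))
      = H p (fun ω => (fun k => W k ω)) := H_comp_inj _ hf (fun ω => (fun k => W k ω))
  have h3 : 0 ≤ MI p (fun ω => (fun k : s => W k.1 ω))
      (fun ω => (fun k : (sᶜ : Finset (Fin K)) => W k.1 ω)) := MI_nonneg hp _ _
  simp only [MI] at h3
  rw [e, hindep] at h3
  have h4 : ∑ k ∈ s, H p (W k) + ∑ k ∈ (sᶜ : Finset (Fin K)), H p (W k) = ∑ k, H p (W k) :=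
    Finset.sum_add_sum_compl s _
  linarith

end SDMMAux

/-- **Lemma 11 of MM-XSTPIR.**
If `W₁, …, W_K` are mutually independent messages, each of entropy `ℓ`, the
storage `S'` of up to `X` colluding servers is independent of the messages,
and the queries `Q` are independent of `((W_k)_{k∈𝒦}, (W_k)_{k∈κ}, S')`, then
`I((W_k)_{k∈𝒦} ; (S', Q, (W_k)_{k∈κ})) = |𝒦 ∩ κ| · ℓ`. -/
theorem mm_xstpir_side_information_mutual_info
    (K : ℕ) (hK : 0 < K) (ℓ : ℝ)
    (Ω : Type) [Fintype Ω] (p : Ω → ℝ) (hp : SDMM.IsPMF p)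
    (𝒲 : Fin K → Type) [∀ k, Fintype (𝒲 k)]
    (W : ∀ k, Ω → 𝒲 k)
    (hent : ∀ k, SDMM.H p (W k) = ℓ)
    (hindep : SDMM.H p (fun ω => (fun k => W k ω)) = ∑ k, SDMM.H p (W k))
    (𝒦 κ : Finset (Fin K))
    {αS' αQ : Type} [Fintype αS'] [Fintype αQ]
    (S' : Ω → αS') (Q : Ω → αQ)
    (hS' : SDMM.MI p S' (fun ω => (fun k => W k ω)) = 0)
    (hQ : SDMM.MI p Q (fun ω =>
      ((fun k : 𝒦 => W k.1 ω), (fun k : κ => W k.1 ω), S' ω)) = 0) :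
    SDMM.MI p (fun ω => (fun k : 𝒦 => W k.1 ω))
        (fun ω => (S' ω, Q ω, (fun k : κ => W k.1 ω))) =
      ((𝒦 ∩ κ).card : ℝ) * ℓ := by
  have hcsum : ∀ s : Finset (Fin K), ∑ k ∈ s, SDMM.H p (W k) = (s.card : ℝ) * ℓ := by
    intro s
    rw [Finset.sum_congr rfl (fun k _ => hent k), Finset.sum_const, nsmul_eq_mul]
  have hA : SDMM.H p (fun ω => (fun k : 𝒦 => W k.1 ω)) = (𝒦.card : ℝ) * ℓ := by
    rw [SDMMAux.H_tuple_eq hp W hindep 𝒦, hcsum]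
  have hB : SDMM.H p (fun ω => (fun k : κ => W k.1 ω)) = (κ.card : ℝ) * ℓ := by
    rw [SDMMAux.H_tuple_eq hp W hindep κ, hcsum]
  have hU : SDMM.H p (fun ω => (fun k : (𝒦 ∪ κ : Finset (Fin K)) => W k.1 ω))
      = (((𝒦 ∪ κ : Finset (Fin K))).card : ℝ) * ℓ := by
    rw [SDMMAux.H_tuple_eq hp W hindep (𝒦 ∪ κ), hcsum]
  -- H(W_𝒦, W_κ) = H(W_{𝒦∪κ})
  have hfAB : Function.Injective
      (fun t : (∀ k : (𝒦 ∪ κ : Finset (Fin K)), 𝒲 k.1) =>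
        ((fun k : 𝒦 => t ⟨k.1, Finset.mem_union_left κ k.2⟩),
         (fun k : κ => t ⟨k.1, Finset.mem_union_right 𝒦 k.2⟩))) := by
    intro t1 t2 h
    have ha := congrArg Prod.fst h
    have hb := congrArg Prod.snd h
    dsimp only at ha hb
    funext k
    obtain ⟨kv, hkm⟩ := k
    rcases Finset.mem_union.1 hkm with hk | hk
    · exact congrFun ha ⟨kv, hk⟩
    · exact congrFun hb ⟨kv, hk⟩
  have hpairAB : SDMM.H p (fun ω =>
        ((fun k : 𝒦 => W k.1 ω), (fun k : κ => W k.1 ω)))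
      = (((𝒦 ∪ κ : Finset (Fin K))).card : ℝ) * ℓ := by
    rw [← hU]
    have h := SDMMAux.H_comp_inj (p := p) _ hfAB
      (fun ω => (fun k : (𝒦 ∪ κ : Finset (Fin K)) => W k.1 ω))
    simpa using h
  -- independences derived from hS'
  have hS'AB : SDMM.MI p S' (fun ω =>
      ((fun k : 𝒦 => W k.1 ω), (fun k : κ => W k.1 ω))) = 0 := by
    have h := SDMMAux.MI_comp_eq_zero hp S' (fun ω => (fun k => W k ω))
      (fun w : (∀ k, 𝒲 k) => ((fun k : 𝒦 => w k.1), (fun k : κ => w k.1))) hS'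
    simpa using h
  have hS'B : SDMM.MI p S' (fun ω => (fun k : κ => W k.1 ω)) = 0 := by
    have h := SDMMAux.MI_comp_eq_zero hp S' (fun ω => (fun k => W k ω))
      (fun w : (∀ k, 𝒲 k) => (fun k : κ => w k.1)) hS'
    simpa using h
  -- independences derived from hQ
  have hQBS : SDMM.MI p Q (fun ω => ((fun k : κ => W k.1 ω), S' ω)) = 0 := by
    have h := SDMMAux.MI_comp_eq_zero hp Q
      (fun ω => ((fun k : 𝒦 => W k.1 ω), (fun k : κ => W k.1 ω), S' ω))
      (fun t : (∀ k : 𝒦, 𝒲 k.1) × (∀ k : κ, 𝒲 k.1) × αS' => (t.2.1, t.2.2)) hQ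
    simpa using h
  -- H(S', Q, W_κ)
  have hBS : SDMM.H p (fun ω => ((fun k : κ => W k.1 ω), S' ω))
      = SDMM.H p S' + (κ.card : ℝ) * ℓ := by
    have hswap : Function.Injective
        (fun t : αS' × (∀ k : κ, 𝒲 k.1) => (t.2, t.1)) := by
      intro t1 t2 h
      obtain ⟨a1, b1⟩ := t1; obtain ⟨a2, b2⟩ := t2
      simp only [Prod.ext_iff] at h ⊢
      tauto
    have eswap : SDMM.H p (fun ω => ((fun k : κ => W k.1 ω), S' ω))
        = SDMM.H p (fun ω => (S' ω, (fun k : κ => W k.1 ω))) := by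
      have h := SDMMAux.H_comp_inj (p := p) _ hswap (fun ω => (S' ω, (fun k : κ => W k.1 ω)))
      simpa using h
    rw [eswap, SDMMAux.H_pair_of_MI_eq_zero hS'B, hB]
  have hSQB : SDMM.H p (fun ω => (S' ω, Q ω, (fun k : κ => W k.1 ω)))
      = SDMM.H p Q + SDMM.H p S' + (κ.card : ℝ) * ℓ := by
    have hre : Function.Injective
        (fun t : αQ × ((∀ k : κ, 𝒲 k.1) × αS') => (t.2.2, t.1, t.2.1)) := by
      intro t1 t2 h
      obtain ⟨a1, b1, c1⟩ := t1; obtain ⟨a2, b2, c2⟩ := t2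
      simp only [Prod.ext_iff] at h ⊢
      tauto
    have ere : SDMM.H p (fun ω => (S' ω, Q ω, (fun k : κ => W k.1 ω)))
        = SDMM.H p (fun ω => (Q ω, ((fun k : κ => W k.1 ω), S' ω))) := by
      have h := SDMMAux.H_comp_inj (p := p) _ hre (fun ω => (Q ω, ((fun k : κ => W k.1 ω), S' ω)))
      simpa using h
    rw [ere, SDMMAux.H_pair_of_MI_eq_zero hQBS, hBS]
    ring
  -- H(W_𝒦, S', Q, W_κ)
  have hY : SDMM.H p (fun ω =>
        ((fun k : 𝒦 => W k.1 ω), (fun k : κ => W k.1 ω), S' ω))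
      = SDMM.H p S' + (((𝒦 ∪ κ : Finset (Fin K))).card : ℝ) * ℓ := by
    have hre : Function.Injective
        (fun t : αS' × ((∀ k : 𝒦, 𝒲 k.1) × (∀ k : κ, 𝒲 k.1)) =>
          (t.2.1, t.2.2, t.1)) := by
      intro t1 t2 h
      obtain ⟨a1, b1, c1⟩ := t1; obtain ⟨a2, b2, c2⟩ := t2
      simp only [Prod.ext_iff] at h ⊢
      tauto
    have ere : SDMM.H p (fun ω =>
          ((fun k : 𝒦 => W k.1 ω), (fun k : κ => W k.1 ω), S' ω))
        = SDMM.H p (fun ω => (S' ω,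
            ((fun k : 𝒦 => W k.1 ω), (fun k : κ => W k.1 ω)))) := by
      have h := SDMMAux.H_comp_inj (p := p) _ hre (fun ω => (S' ω,
        ((fun k : 𝒦 => W k.1 ω), (fun k : κ => W k.1 ω))))
      simpa using h
    rw [ere, SDMMAux.H_pair_of_MI_eq_zero hS'AB, hpairAB]
  have hbig : SDMM.H p (fun ω =>
        ((fun k : 𝒦 => W k.1 ω), (S' ω, Q ω, (fun k : κ => W k.1 ω))))
      = SDMM.H p Q + SDMM.H p S' + (((𝒦 ∪ κ : Finset (Fin K))).card : ℝ) * ℓ := by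
    have hre : Function.Injective
        (fun t : αQ × ((∀ k : 𝒦, 𝒲 k.1) × (∀ k : κ, 𝒲 k.1) × αS') =>
          (t.2.1, (t.2.2.2, t.1, t.2.2.1))) := by
      intro t1 t2 h
      obtain ⟨a1, b1, c1, d1⟩ := t1; obtain ⟨a2, b2, c2, d2⟩ := t2
      simp only [Prod.ext_iff] at h ⊢
      tauto
    have ere : SDMM.H p (fun ω =>
          ((fun k : 𝒦 => W k.1 ω), (S' ω, Q ω, (fun k : κ => W k.1 ω))))
        = SDMM.H p (fun ω => (Q ω,
            ((fun k : 𝒦 => W k.1 ω), (fun k : κ => W k.1 ω), S' ω))) := by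
      have h := SDMMAux.H_comp_inj (p := p) _ hre (fun ω => (Q ω,
        ((fun k : 𝒦 => W k.1 ω), (fun k : κ => W k.1 ω), S' ω)))
      simpa using h
    rw [ere, SDMMAux.H_pair_of_MI_eq_zero hQ, hY]
    ring
  simp only [SDMM.MI]
  rw [hA, hSQB, hbig]
  have hcard : ((𝒦 ∩ κ).card : ℝ) + (((𝒦 ∪ κ : Finset (Fin K))).card : ℝ)
      = (𝒦.card : ℝ) + (κ.card : ℝ) := by
    exact_mod_cast Finset.card_inter_add_card_union 𝒦 κ
  linear_combination (-ℓ) * hcard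
end
end

section
/- Let F be a field, let S ≥ 1, X_A ≥ 0, X_B ≥ 0 with X_A + X_B ≥ 1, and let L, K, M be positive integers. Let f₁, …, f_S ∈ F, and for each s ∈ [S] let A_s ∈ F^{L×K}, B_s ∈ F^{K×M}, Z_{s,x} ∈ F^{L×K} for x ∈ [X_A], and Z′_{s,x′} ∈ F^{K×M} for x′ ∈ [X_B]. Then there exist matrices C₀, C₁, …, C_{X_A+X_B−1} ∈ F^{L×M}, not depending on α, such that for every α ∈ F with f_s + α ≠ 0 for all s ∈ [S]: Σ_{s=1}^{S} (A_s + Σ_{x=1}^{X_A} (f_s+α)^x Z_{s,x}) · (f_s+α)^{−1} (B_s + Σ_{x′=1}^{X_B} (f_s+α)^{x′} Z′_{s,x′}) = Σ_{s=1}^{S} (f_s+α)^{−1} A_s B_s + Σ_{t=0}^{X_A+X_B−1} α^t C_t. -/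
open Polynomial Finset


/-- **Correctness of the cross-subspace alignment scheme (Section 5.2).**
Over a field `F`, with `S ≥ 1` desired products and noise levels
`X_A, X_B ≥ 0`, `X_A + X_B ≥ 1`, the server computation
`Σₛ Ãₛ B̃ₛ` decomposes as the desired terms `Σₛ (fₛ+α)⁻¹ AₛBₛ` plus an
interference polynomial `Σ_{t<X_A+X_B} αᵗ C_t` whose coefficients `C_t` do not
depend on the evaluation point `α`. -/
theorem cross_subspace_alignment_identity
    (F : Type) [Field F] (S XA XB L K M : ℕ)
    (hS : 1 ≤ S) (hXAB : 1 ≤ XA + XB)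
    (hL : 0 < L) (hK : 0 < K) (hM : 0 < M)
    (f : Fin S → F)
    (A : Fin S → Matrix (Fin L) (Fin K) F)
    (B : Fin S → Matrix (Fin K) (Fin M) F)
    (Z : Fin S → Fin XA → Matrix (Fin L) (Fin K) F)
    (Z' : Fin S → Fin XB → Matrix (Fin K) (Fin M) F) :
    ∃ C : Fin (XA + XB) → Matrix (Fin L) (Fin M) F,
      ∀ α : F, (∀ s, f s + α ≠ 0) →
        (∑ s, (A s + ∑ x : Fin XA, (f s + α) ^ (x.1 + 1) • Z s x) *
            ((f s + α)⁻¹ • (B s + ∑ x' : Fin XB, (f s + α) ^ (x'.1 + 1) • Z' s x'))) =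
          (∑ s, (f s + α)⁻¹ • (A s * B s)) +
            ∑ t : Fin (XA + XB), α ^ t.1 • C t := by
  classical
  set q : Fin S → Matrix (Fin L) (Fin M) F[X] := fun s =>
    (∑ x' : Fin XB, ((X : F[X]) + C (f s)) ^ (x'.1 : ℕ) • (A s * Z' s x').map C)
    + (∑ x : Fin XA, ((X : F[X]) + C (f s)) ^ (x.1 : ℕ) • (Z s x * B s).map C)
    + (∑ x : Fin XA, ∑ x' : Fin XB,
        ((X : F[X]) + C (f s)) ^ (x.1 + x'.1 + 1) • (Z s x * Z' s x').map C) with hq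
  have key : ∀ (k : ℕ) (a c : F), k ≤ XA + XB - 1 →
      (((X : F[X]) + C a) ^ k * C c).natDegree ≤ XA + XB - 1 := by
    intro k a c hk
    refine natDegree_mul_le.trans (le_trans ?_ hk)
    simp [natDegree_pow, natDegree_X_add_C]
  have hdeg : ∀ i j, (∑ s, q s i j).natDegree < XA + XB := by
    intro i j
    have h1 : ∀ s : Fin S, (q s i j).natDegree ≤ XA + XB - 1 := by
      intro s
      simp only [hq, Matrix.add_apply, Matrix.sum_apply, Matrix.smul_apply, Matrix.map_apply,
        smul_eq_mul]
      refine (natDegree_add_le _ _).trans (max_le ((natDegree_add_le _ _).trans (max_le ?_ ?_)) ?_)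
      · exact natDegree_sum_le_of_forall_le _ _ fun x' _ => key _ _ _ (by omega)
      · exact natDegree_sum_le_of_forall_le _ _ fun x _ => key _ _ _ (by omega)
      · refine natDegree_sum_le_of_forall_le _ _ fun x _ => ?_
        refine natDegree_sum_le_of_forall_le _ _ fun x' _ => key _ _ _ (by omega)
    have h2 : (∑ s, q s i j).natDegree ≤ XA + XB - 1 := by
      simpa using natDegree_sum_le_of_forall_le Finset.univ (fun s => q s i j) fun s _ => h1 s
    omega
  refine ⟨fun t i j => (∑ s, q s i j).coeff t.1, fun α hα => ?_⟩
  have main : ∀ s : Fin S,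
      (A s + ∑ x : Fin XA, (f s + α) ^ (x.1 + 1) • Z s x) *
        ((f s + α)⁻¹ • (B s + ∑ x' : Fin XB, (f s + α) ^ (x'.1 + 1) • Z' s x'))
      = (f s + α)⁻¹ • (A s * B s) + (q s).map (Polynomial.eval α) := by
    intro s
    have hb := hα s
    set b := f s + α with hbdef
    have hpow : ∀ k : ℕ, b⁻¹ * b ^ (k + 1) = b ^ k := by
      intro k
      rw [pow_succ, mul_comm, mul_assoc, mul_inv_cancel₀ hb, mul_one]
    have hqe : (q s).map (Polynomial.eval α) =
        (∑ x' : Fin XB, b ^ (x'.1 : ℕ) • (A s * Z' s x'))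
        + (∑ x : Fin XA, b ^ (x.1 : ℕ) • (Z s x * B s))
        + (∑ x : Fin XA, ∑ x' : Fin XB, b ^ (x.1 + x'.1 + 1) • (Z s x * Z' s x')) := by
      ext i j
      simp [hq, Matrix.map_apply, Matrix.add_apply, Matrix.sum_apply, Matrix.smul_apply,
        eval_finset_sum, Matrix.mul_apply, smul_eq_mul, hbdef, add_comm α (f s),
        Finset.mul_sum]
    have e1 : b⁻¹ • (A s * ∑ x' : Fin XB, b ^ (x'.1 + 1) • Z' s x')
        = ∑ x' : Fin XB, b ^ (x'.1 : ℕ) • (A s * Z' s x') := by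
      rw [Matrix.mul_sum, Finset.smul_sum]
      exact Finset.sum_congr rfl fun x' _ => by rw [Matrix.mul_smul, smul_smul, hpow]
    have e2 : b⁻¹ • ((∑ x : Fin XA, b ^ (x.1 + 1) • Z s x) * B s)
        = ∑ x : Fin XA, b ^ (x.1 : ℕ) • (Z s x * B s) := by
      rw [Matrix.sum_mul, Finset.smul_sum]
      exact Finset.sum_congr rfl fun x _ => by rw [Matrix.smul_mul, smul_smul, hpow]
    have e3 : b⁻¹ • ((∑ x : Fin XA, b ^ (x.1 + 1) • Z s x) *
          (∑ x' : Fin XB, b ^ (x'.1 + 1) • Z' s x'))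
        = ∑ x : Fin XA, ∑ x' : Fin XB, b ^ (x.1 + x'.1 + 1) • (Z s x * Z' s x') := by
      rw [Matrix.sum_mul, Finset.smul_sum]
      refine Finset.sum_congr rfl fun x _ => ?_
      rw [Matrix.mul_sum, Finset.smul_sum]
      refine Finset.sum_congr rfl fun x' _ => ?_
      rw [Matrix.smul_mul, Matrix.mul_smul, smul_smul, smul_smul]
      congr 1
      rw [hpow, ← pow_add]
      congr 1
    rw [Matrix.mul_smul, Matrix.mul_add, Matrix.add_mul, Matrix.add_mul,
      smul_add, smul_add, smul_add, e1, e2, e3, hqe]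
    abel
  rw [Finset.sum_congr rfl fun s _ => main s, Finset.sum_add_distrib]
  congr 1
  ext i j
  simp only [Matrix.sum_apply, Matrix.map_apply, Matrix.smul_apply, smul_eq_mul]
  rw [← eval_finset_sum, eval_eq_sum_range' (hdeg i j), ← Fin.sum_univ_eq_sum_range]
  exact Finset.sum_congr rfl fun t _ => mul_comm _ _
end
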